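/- arXiv:0804.2441 — 7 statements merged into one kernel-verified Lean document; each statement's English description precedes it below -/
import Mathlib

section
/- Let H be a complex inner product space and let x, y, z ∈ H all be nonzero. Define s(u, v) = √(1 − C(u, v)) for nonzero u, v ∈ H. Then s(x, z) ≤ s(x, y) + s(y, z). -/
open scoped InnerProductSpace

/-- The coherence of two vectors of a complex inner product space
(inner product conjugate-linear in the first argument):
`C(u, v) = ‖⟪u, v⟫‖² / (‖u‖² · ‖v‖²)`. -/
noncomputable def coherence {H : Type*} [NormedAddCommGroup H]
    [InnerProductSpace ℂ H] (u v : H) : ℝ :=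
  ‖⟪u, v⟫_ℂ‖ ^ 2 / (‖u‖ ^ 2 * ‖v‖ ^ 2)

/-!
`√(1 - C(u, v))` is the sine of the Fubini–Study angle `θ(u, v) = arccos (|⟪u, v⟫| / (‖u‖ ‖v‖))`
between the complex lines through `u` and `v`. Rescaling by unimodular scalars does not change `θ`,
and after choosing the phases that make `⟪u, v⟫` real and nonnegative, `θ` is the ordinary angle
for the real inner product `Re ⟪·, ·⟫`; so `θ` inherits the triangle inequality for angles.
Finally `sin γ ≤ sin α + sin β` whenever `γ ≤ α + β` with `α, β ∈ [0, π/2]`: below `π/2` this is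
the addition formula, and above it `sin α + sin β ≥ sin α + cos α ≥ 1`.
-/

open Real InnerProductGeometry

theorem Real.sin_le_sin_add_sin_of_le_add {α β γ : ℝ} (hα : 0 ≤ α) (hα' : α ≤ π / 2)
    (hβ : 0 ≤ β) (hβ' : β ≤ π / 2) (hγ : -(π / 2) ≤ γ) (hγαβ : γ ≤ α + β) :
    sin γ ≤ sin α + sin β := by
  have hsinα := sin_nonneg_of_nonneg_of_le_pi hα (by linarith)
  have hsinβ := sin_nonneg_of_nonneg_of_le_pi hβ (by linarith)
  have hcosα := cos_nonneg_of_neg_pi_div_two_le_of_le (by linarith) hα'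
  have hcosβ := cos_nonneg_of_neg_pi_div_two_le_of_le (by linarith) hβ'
  rcases le_or_gt (α + β) (π / 2) with hsum | hsum
  · calc sin γ ≤ sin (α + β) := sin_le_sin_of_le_of_le_pi_div_two hγ hsum hγαβ
      _ = sin α * cos β + cos α * sin β := sin_add α β
      _ ≤ sin α + sin β := by nlinarith [cos_le_one α, cos_le_one β]
  · have hcos_le_sin : cos α ≤ sin β := by
      rw [← sin_pi_div_two_sub]
      exact sin_le_sin_of_le_of_le_pi_div_two (by linarith) hβ' (by linarith)
    calc sin γ ≤ 1 := sin_le_one γ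
      _ = sin α ^ 2 + cos α ^ 2 := (sin_sq_add_cos_sq α).symm
      _ ≤ sin α + sin β := by nlinarith [sin_le_one α, cos_le_one α]

section FubiniStudy

variable {H : Type*} [NormedAddCommGroup H] [InnerProductSpace ℂ H]

noncomputable def fubiniStudyAngle (u v : H) : ℝ :=
  arccos (‖⟪u, v⟫_ℂ‖ / (‖u‖ * ‖v‖))

theorem fubiniStudyAngle_comm (u v : H) : fubiniStudyAngle u v = fubiniStudyAngle v u := by
  rw [fubiniStudyAngle, fubiniStudyAngle, norm_inner_symm, mul_comm]

theorem fubiniStudyAngle_nonneg (u v : H) : 0 ≤ fubiniStudyAngle u v := arccos_nonneg _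

theorem fubiniStudyAngle_le_pi_div_two (u v : H) : fubiniStudyAngle u v ≤ π / 2 :=
  arccos_le_pi_div_two.mpr (by positivity)

theorem fubiniStudyAngle_smul_smul (u v : H) {a b : ℂ} (ha : ‖a‖ = 1) (hb : ‖b‖ = 1) :
    fubiniStudyAngle (a • u) (b • v) = fubiniStudyAngle u v := by
  simp [fubiniStudyAngle, norm_smul, ha, hb]

theorem sqrt_one_sub_coherence (u v : H) :
    √(1 - coherence u v) = sin (fubiniStudyAngle u v) := by
  rw [fubiniStudyAngle, sin_arccos, coherence, div_pow, mul_pow]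

attribute [local instance] InnerProductSpace.complexToReal

theorem fubiniStudyAngle_le_angle (u v : H) : fubiniStudyAngle u v ≤ angle u v :=
  arccos_le_arccos (div_le_div_of_nonneg_right (Complex.re_le_norm _) (by positivity))

theorem exists_angle_smul_eq_fubiniStudyAngle (u v : H) :
    ∃ c : ℂ, ‖c‖ = 1 ∧ angle (c • u) v = fubiniStudyAngle u v := by
  set c := Complex.exp (Complex.arg ⟪u, v⟫_ℂ * Complex.I)
  have hc : ‖c‖ = 1 := Complex.norm_exp_ofReal_mul_I _
  refine ⟨c, hc, ?_⟩
  have hphase : starRingEnd ℂ c * ⟪u, v⟫_ℂ = ‖⟪u, v⟫_ℂ‖ := by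
    conv_lhs => rw [← Complex.norm_mul_exp_arg_mul_I ⟪u, v⟫_ℂ]
    rw [mul_left_comm, Complex.conj_mul', hc]
    simp
  rw [angle, fubiniStudyAngle, real_inner_eq_re_inner ℂ, inner_smul_left, hphase, norm_smul, hc,
    one_mul]
  rfl

theorem fubiniStudyAngle_le_add (x y z : H) :
    fubiniStudyAngle x z ≤ fubiniStudyAngle x y + fubiniStudyAngle y z := by
  obtain ⟨a, ha, hxy⟩ := exists_angle_smul_eq_fubiniStudyAngle x y
  obtain ⟨b, hb, hzy⟩ := exists_angle_smul_eq_fubiniStudyAngle z y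
  calc fubiniStudyAngle x z = fubiniStudyAngle (a • x) (b • z) :=
        (fubiniStudyAngle_smul_smul x z ha hb).symm
    _ ≤ angle (a • x) (b • z) := fubiniStudyAngle_le_angle _ _
    _ ≤ angle (a • x) y + angle y (b • z) := angle_le_angle_add_angle _ _ _
    _ = fubiniStudyAngle x y + fubiniStudyAngle y z := by
        rw [hxy, angle_comm, hzy, fubiniStudyAngle_comm z y]

end FubiniStudy

theorem coherence_dist_triangle_general
    {H : Type*} [NormedAddCommGroup H] [InnerProductSpace ℂ H]
    (x y z : H) :
    Real.sqrt (1 - coherence x z) ≤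
      Real.sqrt (1 - coherence x y) + Real.sqrt (1 - coherence y z) := by
  simp only [sqrt_one_sub_coherence]
  exact sin_le_sin_add_sin_of_le_add (fubiniStudyAngle_nonneg x y)
    (fubiniStudyAngle_le_pi_div_two x y) (fubiniStudyAngle_nonneg y z)
    (fubiniStudyAngle_le_pi_div_two y z) (by linarith [fubiniStudyAngle_nonneg x z, pi_pos])
    (fubiniStudyAngle_le_add x y z)

/-- the single-frequency coherence distance `s(u, v) = √(1 − C(u, v))`
satisfies the triangle inequality on nonzero vectors. -/
theorem coherence_dist_triangle
    {H : Type*} [NormedAddCommGroup H] [InnerProductSpace ℂ H]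
    (x y z : H) (hx : x ≠ 0) (hy : y ≠ 0) (hz : z ≠ 0) :
    Real.sqrt (1 - coherence x z) ≤
      Real.sqrt (1 - coherence x y) + Real.sqrt (1 - coherence y z) :=
  coherence_dist_triangle_general x y z
end

section
/- Let H be a complex inner product space and let f, g, k : ℝ → H be functions with f ω ≠ 0, g ω ≠ 0, k ω ≠ 0 for every ω, such that the three functions ω ↦ C(f ω, g ω), ω ↦ C(g ω, k ω), ω ↦ C(f ω, k ω) are measurable on [−π, π]. Define d(f, g) = ( (1/(2π)) · ∫_{−π}^{π} (1 − C(f ω, g ω)) dω )^{1/2}, and similarly for the other pairs. Then: (i) d(f, g) ≥ 0; (ii) d(f, g) = d(g, f); (iii) d(f, f) = 0; (iv) d(f, k) ≤ d(f, g) + d(g, k). -/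
open scoped InnerProductSpace

/-- The coherence-based distance between two frequency-indexed families of
vectors: `d(f, g) = ( (1/(2π)) ∫_{-π}^{π} (1 − C(f ω, g ω)) dω )^{1/2}`. -/
noncomputable def cohDist {H : Type*} [NormedAddCommGroup H]
    [InnerProductSpace ℂ H] (f g : ℝ → H) : ℝ :=
  Real.sqrt ((1 / (2 * Real.pi)) *
    ∫ ω in (-Real.pi)..Real.pi, (1 - coherence (f ω) (g ω)))

/-! For unit vectors `u`, `v`, the number `√(1 - C(u, v))` is the distance from `u` to the line
`ℂ v`, attained at `⟪v, u⟫ • v`. Distances to lines through the origin satisfy the triangle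
inequality, and coherence is invariant under rescaling either vector, so `√(1 - C)` satisfies a
pointwise triangle inequality. Minkowski's inequality in `L²(-π, π)` integrates it. -/

open MeasureTheory

section Projection

variable {𝕜 E : Type*} [RCLike 𝕜] [SeminormedAddCommGroup E] [InnerProductSpace 𝕜 E]

theorem inner_sub_inner_smul_self_eq_zero {w : E} (hw : ‖w‖ = 1) (u : E) :
    ⟪u - ⟪w, u⟫_𝕜 • w, w⟫_𝕜 = 0 := by
  rw [inner_sub_left, inner_smul_left, inner_self_eq_norm_sq_to_K, hw, inner_conj_symm]
  simp

theorem norm_sub_smul_sq {w : E} (hw : ‖w‖ = 1) (u : E) (c : 𝕜) :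
    ‖u - c • w‖ ^ 2 = ‖u - ⟪w, u⟫_𝕜 • w‖ ^ 2 + ‖⟪w, u⟫_𝕜 - c‖ ^ 2 := by
  have horth : ⟪u - ⟪w, u⟫_𝕜 • w, (⟪w, u⟫_𝕜 - c) • w⟫_𝕜 = 0 := by
    rw [inner_smul_right, inner_sub_inner_smul_self_eq_zero hw, mul_zero]
  have h := norm_add_sq_eq_norm_sq_add_norm_sq_of_inner_eq_zero _ _ horth
  rw [norm_smul, hw, mul_one, sub_smul, sub_add_sub_cancel] at h
  simpa only [sq] using h

theorem norm_sub_inner_smul_le {w : E} (hw : ‖w‖ = 1) (u : E) (c : 𝕜) :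
    ‖u - ⟪w, u⟫_𝕜 • w‖ ≤ ‖u - c • w‖ := by
  refine le_of_pow_le_pow_left₀ two_ne_zero (norm_nonneg _) ?_
  rw [norm_sub_smul_sq hw u c]
  exact le_add_of_nonneg_right (sq_nonneg _)

theorem norm_sq_eq_norm_sub_inner_smul_sq_add {w : E} (hw : ‖w‖ = 1) (u : E) :
    ‖u‖ ^ 2 = ‖u - ⟪w, u⟫_𝕜 • w‖ ^ 2 + ‖⟪w, u⟫_𝕜‖ ^ 2 := by
  simpa using norm_sub_smul_sq hw u (0 : 𝕜)

theorem norm_sub_inner_smul_le_add {u v w : E} (hu : ‖u‖ ≤ 1) (hv : ‖v‖ = 1)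
    (hw : ‖w‖ = 1) :
    ‖u - ⟪w, u⟫_𝕜 • w‖ ≤ ‖u - ⟪v, u⟫_𝕜 • v‖ + ‖v - ⟪w, v⟫_𝕜 • w‖ := by
  set α := ⟪v, u⟫_𝕜
  set β := ⟪w, v⟫_𝕜
  have hα : ‖α‖ ≤ 1 := by
    calc ‖α‖ ≤ ‖v‖ * ‖u‖ := norm_inner_le_norm v u
      _ ≤ 1 := by rw [hv, one_mul]; exact hu
  have hsplit : u - (α * β) • w = (u - α • v) + α • (v - β • w) := by
    rw [smul_sub, smul_smul]; abel
  calc ‖u - ⟪w, u⟫_𝕜 • w‖ ≤ ‖u - (α * β) • w‖ := norm_sub_inner_smul_le hw u _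
    _ ≤ ‖u - α • v‖ + ‖α‖ * ‖v - β • w‖ := by
      rw [hsplit, ← norm_smul]; exact norm_add_le _ _
    _ ≤ ‖u - α • v‖ + ‖v - β • w‖ := by
      gcongr; exact mul_le_of_le_one_left (norm_nonneg _) hα

end Projection

section Coherence

variable {H : Type*} [NormedAddCommGroup H] [InnerProductSpace ℂ H]

theorem coherence_nonneg (u v : H) : 0 ≤ coherence u v := by
  unfold coherence; positivity

theorem coherence_le_one (u v : H) : coherence u v ≤ 1 := by
  unfold coherence
  refine div_le_one_of_le₀ ?_ (by positivity)
  rw [← mul_pow]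
  exact pow_le_pow_left₀ (norm_nonneg _) (norm_inner_le_norm u v) 2

theorem one_sub_coherence_nonneg (u v : H) : 0 ≤ 1 - coherence u v :=
  sub_nonneg.2 (coherence_le_one u v)

theorem coherence_comm (u v : H) : coherence u v = coherence v u := by
  rw [coherence, coherence, norm_inner_symm, mul_comm]

@[simp]
theorem coherence_zero_left (v : H) : coherence 0 v = 0 := by
  simp [coherence]

@[simp]
theorem coherence_zero_right (u : H) : coherence u 0 = 0 := by
  simp [coherence]

theorem coherence_self {u : H} (hu : u ≠ 0) : coherence u u = 1 := by
  have hu' : ‖u‖ ≠ 0 := norm_ne_zero_iff.2 hu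
  simp only [coherence, inner_self_eq_norm_sq_to_K, norm_pow, RCLike.norm_ofReal, abs_norm]
  field_simp

theorem coherence_smul_left {c : ℂ} (hc : c ≠ 0) (u v : H) :
    coherence (c • u) v = coherence u v := by
  have hc' : ‖c‖ ^ 2 ≠ 0 := by positivity
  rw [coherence, coherence, inner_smul_left, norm_mul, RCLike.norm_conj, norm_smul, mul_pow,
    mul_pow, mul_assoc, mul_div_mul_left _ _ hc']

theorem coherence_smul_right {c : ℂ} (hc : c ≠ 0) (u v : H) :
    coherence u (c • v) = coherence u v := by
  rw [coherence_comm, coherence_smul_left hc, coherence_comm]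

theorem coherence_smul_inv_norm (u v : H) :
    coherence ((‖u‖⁻¹ : ℂ) • u) ((‖v‖⁻¹ : ℂ) • v) = coherence u v := by
  rcases eq_or_ne u 0 with rfl | hu
  · simp
  rcases eq_or_ne v 0 with rfl | hv
  · simp
  rw [coherence_smul_left (by simpa using hu), coherence_smul_right (by simpa using hv)]

theorem coherence_of_norm_eq_one {u v : H} (hu : ‖u‖ = 1) (hv : ‖v‖ = 1) :
    coherence u v = ‖⟪u, v⟫_ℂ‖ ^ 2 := by
  rw [coherence, hu, hv]; simp

theorem sqrt_one_sub_coherence_of_norm_eq_one {u v : H} (hu : ‖u‖ = 1) (hv : ‖v‖ = 1) :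
    √(1 - coherence u v) = ‖u - ⟪v, u⟫_ℂ • v‖ := by
  have h := norm_sq_eq_norm_sub_inner_smul_sq_add (𝕜 := ℂ) hv u
  rw [hu, one_pow] at h
  rw [coherence_of_norm_eq_one hu hv, norm_inner_symm, h, add_sub_cancel_right,
    Real.sqrt_sq (norm_nonneg _)]

theorem sqrt_one_sub_coherence_le_one (u v : H) : √(1 - coherence u v) ≤ 1 :=
  Real.sqrt_le_one.2 (sub_le_self _ (coherence_nonneg u v))

/-- The zero vector is at distance `1` from everything, since `x / 0 = 0` makes its coherence
`0`. -/
theorem sqrt_one_sub_coherence_le_add (u v w : H) :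
    √(1 - coherence u w) ≤ √(1 - coherence u v) + √(1 - coherence v w) := by
  rcases eq_or_ne u 0 with rfl | hu
  · simp
  rcases eq_or_ne v 0 with rfl | hv
  · simpa using (sqrt_one_sub_coherence_le_one u w).trans (le_add_of_nonneg_right zero_le_one)
  rcases eq_or_ne w 0 with rfl | hw
  · simp
  have hu₁ : ‖(‖u‖⁻¹ : ℂ) • u‖ = 1 := norm_smul_inv_norm hu
  have hv₁ : ‖(‖v‖⁻¹ : ℂ) • v‖ = 1 := norm_smul_inv_norm hv
  have hw₁ : ‖(‖w‖⁻¹ : ℂ) • w‖ = 1 := norm_smul_inv_norm hw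
  rw [← coherence_smul_inv_norm u w, ← coherence_smul_inv_norm u v,
    ← coherence_smul_inv_norm v w, sqrt_one_sub_coherence_of_norm_eq_one hu₁ hw₁,
    sqrt_one_sub_coherence_of_norm_eq_one hu₁ hv₁, sqrt_one_sub_coherence_of_norm_eq_one hv₁ hw₁]
  exact norm_sub_inner_smul_le_add hu₁.le hv₁ hw₁

end Coherence

section SqrtIntegral

variable {α : Type*} [MeasurableSpace α] {μ : Measure α} {F G K : α → ℝ}

theorem memLp_two_sqrt (hF : Integrable F μ) (hF₀ : 0 ≤ F) : MemLp (fun x => √(F x)) 2 μ := by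
  refine (memLp_two_iff_integrable_sq
    (Real.continuous_sqrt.comp_aestronglyMeasurable hF.aestronglyMeasurable)).2 (hF.congr ?_)
  exact ae_of_all _ fun x => (Real.sq_sqrt (hF₀ x)).symm

theorem integral_sqrt_mul_sqrt_le (hF : Integrable F μ) (hG : Integrable G μ) (hF₀ : 0 ≤ F)
    (hG₀ : 0 ≤ G) : ∫ x, √(F x) * √(G x) ∂μ ≤ √(∫ x, F x ∂μ) * √(∫ x, G x ∂μ) := by
  have h := integral_mul_le_Lp_mul_Lq_of_nonneg Real.HolderConjugate.two_two
    (ae_of_all μ fun x => Real.sqrt_nonneg (F x)) (ae_of_all μ fun x => Real.sqrt_nonneg (G x))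
    (by simpa using memLp_two_sqrt hF hF₀) (by simpa using memLp_two_sqrt hG hG₀)
  simpa only [Real.rpow_two, Real.sq_sqrt (hF₀ _), Real.sq_sqrt (hG₀ _), ← Real.sqrt_eq_rpow]
    using h

theorem sqrt_integral_le_add_of_sqrt_le (hF : Integrable F μ) (hG : Integrable G μ)
    (hF₀ : 0 ≤ F) (hG₀ : 0 ≤ G) (hK₀ : 0 ≤ K) (h : ∀ x, √(K x) ≤ √(F x) + √(G x)) :
    √(∫ x, K x ∂μ) ≤ √(∫ x, F x ∂μ) + √(∫ x, G x ∂μ) := by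
  have hFG : Integrable (fun x => √(F x) * √(G x)) μ :=
    (memLp_two_sqrt hF hF₀).integrable_mul (memLp_two_sqrt hG hG₀)
  have hF_add_G : Integrable (fun x => F x + G x) μ := hF.add hG
  have hpt : ∀ x, K x ≤ F x + G x + 2 * (√(F x) * √(G x)) := fun x => by
    have := (Real.sqrt_le_left (by positivity)).1 (h x)
    nlinarith [Real.sq_sqrt (hK₀ x), Real.sq_sqrt (hF₀ x), Real.sq_sqrt (hG₀ x)]
  have hCS := integral_sqrt_mul_sqrt_le hF hG hF₀ hG₀
  rw [Real.sqrt_le_left (by positivity), add_sq, Real.sq_sqrt (integral_nonneg hF₀),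
    Real.sq_sqrt (integral_nonneg hG₀)]
  calc ∫ x, K x ∂μ ≤ ∫ x, (F x + G x + 2 * (√(F x) * √(G x))) ∂μ :=
        integral_mono_of_nonneg (ae_of_all μ hK₀) (hF_add_G.add (hFG.const_mul 2))
          (ae_of_all μ hpt)
    _ = ∫ x, F x ∂μ + ∫ x, G x ∂μ + 2 * ∫ x, √(F x) * √(G x) ∂μ := by
        rw [integral_add hF_add_G (hFG.const_mul 2), integral_add hF hG, integral_const_mul]
    _ ≤ _ := by linarith

end SqrtIntegral

section CohDist

variable {H : Type*} [NormedAddCommGroup H] [InnerProductSpace ℂ H]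

theorem integrable_one_sub_coherence {α : Type*} [MeasurableSpace α] {μ : Measure α}
    [IsFiniteMeasure μ] {f g : α → H}
    (hfg : AEStronglyMeasurable (fun x => coherence (f x) (g x)) μ) :
    Integrable (fun x => 1 - coherence (f x) (g x)) μ := by
  refine Integrable.of_bound (aestronglyMeasurable_const.sub hfg) 1 (ae_of_all μ fun x => ?_)
  rw [Real.norm_of_nonneg (one_sub_coherence_nonneg _ _)]
  exact sub_le_self _ (coherence_nonneg _ _)

theorem cohDist_eq_sqrt_mul_sqrt_integral (f g : ℝ → H) :
    cohDist f g = √(1 / (2 * Real.pi)) *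
      √(∫ ω in Set.Ioc (-Real.pi) Real.pi, 1 - coherence (f ω) (g ω)) := by
  rw [cohDist, intervalIntegral.integral_of_le (by linarith [Real.pi_pos]),
    Real.sqrt_mul (by positivity)]

end CohDist

theorem cohDist_is_pseudometric_general
    {H : Type*} [NormedAddCommGroup H] [InnerProductSpace ℂ H]
    (f g k : ℝ → H)
    (hf : ∀ ω, f ω ≠ 0)
    (mfg : Measurable fun ω => coherence (f ω) (g ω))
    (mgk : Measurable fun ω => coherence (g ω) (k ω)) :
    0 ≤ cohDist f g ∧
    cohDist f g = cohDist g f ∧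
    cohDist f f = 0 ∧
    cohDist f k ≤ cohDist f g + cohDist g k := by
  refine ⟨Real.sqrt_nonneg _, ?_, ?_, ?_⟩
  · simp only [cohDist, coherence_comm (f _)]
  · simp [cohDist, coherence_self (hf _)]
  · simp only [cohDist_eq_sqrt_mul_sqrt_integral]
    rw [← mul_add]
    gcongr
    exact sqrt_integral_le_add_of_sqrt_le
      (integrable_one_sub_coherence mfg.aestronglyMeasurable)
      (integrable_one_sub_coherence mgk.aestronglyMeasurable)
      (fun _ => one_sub_coherence_nonneg _ _) (fun _ => one_sub_coherence_nonneg _ _)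
      (fun _ => one_sub_coherence_nonneg _ _)
      (fun ω => sqrt_one_sub_coherence_le_add (f ω) (g ω) (k ω))

/-- the coherence-based distance is a (pseudo)metric:
it is nonnegative, symmetric, vanishes on the diagonal and satisfies the
triangle inequality. -/
theorem cohDist_is_pseudometric
    {H : Type*} [NormedAddCommGroup H] [InnerProductSpace ℂ H]
    (f g k : ℝ → H)
    (hf : ∀ ω, f ω ≠ 0) (hg : ∀ ω, g ω ≠ 0) (hk : ∀ ω, k ω ≠ 0)
    (mfg : Measurable fun ω => coherence (f ω) (g ω))
    (mgk : Measurable fun ω => coherence (g ω) (k ω))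
    (mfk : Measurable fun ω => coherence (f ω) (k ω)) :
    0 ≤ cohDist f g ∧
    cohDist f g = cohDist g f ∧
    cohDist f f = 0 ∧
    cohDist f k ≤ cohDist f g + cohDist g k :=
  cohDist_is_pseudometric_general f g k hf mfg mgk
end

section
/- In the frequency-domain model of an LCMT, let i and j be nodes with i ≠ j such that i is not a descendant of j. Then ⟨ρ j ω, X i ω⟩ = 0 for every ω ∈ ℝ. -/
open scoped InnerProductSpace

/-- Lemma 1 of the paper: in the frequency-domain model of an
LCMT, the noise acting at a node `j` is uncorrelated with (orthogonal to) the
signal at any node `i ≠ j` that is not a descendant of `j`. -/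
theorem lcmt_noise_uncorrelated_signal
    {H : Type*} [NormedAddCommGroup H] [InnerProductSpace ℂ H]
    {V : Type*} [Fintype V]
    (r : V) (par : V → V)
    (hroot : par r = r)
    (hpar : ∀ j, j ≠ r → par j ≠ j)
    (hreach : ∀ j, ∃ n, par^[n] j = r)
    (h : V → ℝ → ℂ) (ρ : V → ℝ → H)
    (horth : ∀ (ω : ℝ) (a b : V), a ≠ b → ⟪ρ a ω, ρ b ω⟫_ℂ = 0)
    (hwp : ∀ (j : V) (ω : ℝ), ρ j ω ≠ 0)
    (X : V → ℝ → H)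
    (hXr : ∀ ω, X r ω = ρ r ω)
    (hX : ∀ j, j ≠ r → ∀ ω, X j ω = h j ω • X (par j) ω + ρ j ω)
    (i j : V) (hij : i ≠ j)
    (hnotdesc : ¬ ∃ n, 1 ≤ n ∧ par^[n] i = j) :
    ∀ ω : ℝ, ⟪ρ j ω, X i ω⟫_ℂ = 0 := by
  obtain ⟨n, hn⟩ := hreach i
  clear hreach
  induction n generalizing i with
  | zero =>
      simp only [Function.iterate_zero, id] at hn
      intro ω
      rw [hn, hXr]
      exact horth ω j r (fun hc => hij (hn.trans hc.symm))
  | succ n ih =>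
      by_cases hir : i = r
      · intro ω
        rw [hir, hXr]
        exact horth ω j r (fun hc => hij (hir.trans hc.symm))
      · have hpi : par i ≠ j := by
          intro hc
          exact hnotdesc ⟨1, le_refl 1, by simpa using hc⟩
        have hnd' : ¬ ∃ m, 1 ≤ m ∧ par^[m] (par i) = j := by
          rintro ⟨m, hm1, hm⟩
          exact hnotdesc ⟨m + 1, Nat.le_add_left 1 m,
            by rw [Function.iterate_succ_apply]; exact hm⟩
        have hn' : par^[n] (par i) = r := by
          rw [← Function.iterate_succ_apply]; exact hn
        have IH := ih (par i) hpi hnd' hn'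
        intro ω
        rw [hX i hir ω, inner_add_right, inner_smul_right, IH ω,
          horth ω j i (Ne.symm hij)]
        ring
end

section
/- Let H be a complex inner product space and let x, y ∈ H be nonzero. Let w ∈ ℂ and u ∈ H satisfy ⟨x, u⟩ = 0 and ⟨y, u⟩ = 0, and set z = w • y + u; assume z ≠ 0. Then C(x, z) ≤ C(x, y). Moreover, if u ≠ 0 and ⟨x, y⟩ ≠ 0, then C(x, z) < C(x, y). -/
open scoped InnerProductSpace

section

variable {𝕜 E : Type*} [RCLike 𝕜] [NormedAddCommGroup E] [InnerProductSpace 𝕜 E]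

theorem inner_smul_add_right_of_inner_eq_zero {x y u : E} (w : 𝕜) (h : ⟪x, u⟫_𝕜 = 0) :
    ⟪x, w • y + u⟫_𝕜 = w * ⟪x, y⟫_𝕜 := by
  rw [inner_add_right, inner_smul_right, h, add_zero]

theorem norm_smul_add_sq_of_inner_eq_zero {y u : E} (w : 𝕜) (h : ⟪y, u⟫_𝕜 = 0) :
    ‖w • y + u‖ ^ 2 = ‖w‖ ^ 2 * ‖y‖ ^ 2 + ‖u‖ ^ 2 := by
  have horth : ⟪w • y, u⟫_𝕜 = 0 := by rw [inner_smul_left, h, mul_zero]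
  simp only [sq, norm_add_sq_eq_norm_sq_add_norm_sq_of_inner_eq_zero _ _ horth, norm_smul]
  ring

end

section

variable {H : Type*} [NormedAddCommGroup H] [InnerProductSpace ℂ H]

theorem coherence_nonneg_s6 (x y : H) : 0 ≤ coherence x y := by
  unfold coherence
  positivity

theorem coherence_pos {x y : H} (h : ⟪x, y⟫_ℂ ≠ 0) : 0 < coherence x y := by
  have hx : x ≠ 0 := by rintro rfl; exact h (inner_zero_left y)
  have hy : y ≠ 0 := by rintro rfl; exact h (inner_zero_right x)
  exact div_pos (pow_pos (norm_pos_iff.2 h) 2)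
    (mul_pos (pow_pos (norm_pos_iff.2 hx) 2) (pow_pos (norm_pos_iff.2 hy) 2))

theorem coherence_smul_add_of_inner_eq_zero {x y u : H} (w : ℂ)
    (hxu : ⟪x, u⟫_ℂ = 0) (hyu : ⟪y, u⟫_ℂ = 0) :
    coherence x (w • y + u) =
      ‖w‖ ^ 2 * ‖y‖ ^ 2 / (‖w‖ ^ 2 * ‖y‖ ^ 2 + ‖u‖ ^ 2) * coherence x y := by
  rcases eq_or_ne y 0 with rfl | hy
  · simp [coherence, hxu]
  have hy2 : ‖y‖ ^ 2 ≠ 0 := pow_ne_zero 2 (norm_ne_zero_iff.2 hy)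
  unfold coherence
  rw [inner_smul_add_right_of_inner_eq_zero w hxu, norm_smul_add_sq_of_inner_eq_zero w hyu,
    norm_mul, mul_pow, div_mul_div_comm, ← mul_div_mul_right _ _ hy2]
  ring

end

theorem coherence_le_of_gain_plus_orthogonal_noise_general
    {H : Type*} [NormedAddCommGroup H] [InnerProductSpace ℂ H]
    (x y : H)
    (w : ℂ) (u : H) (hxu : ⟪x, u⟫_ℂ = 0) (hyu : ⟪y, u⟫_ℂ = 0)
    (z : H) (hz : z = w • y + u) :
    coherence x z ≤ coherence x y ∧
    (u ≠ 0 → ⟪x, y⟫_ℂ ≠ 0 → coherence x z < coherence x y) := by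
  subst hz
  rw [coherence_smul_add_of_inner_eq_zero w hxu hyu]
  constructor
  · exact mul_le_of_le_one_left (coherence_nonneg_s6 x y)
      (div_le_one_of_le₀ (le_add_of_nonneg_right (sq_nonneg _)) (by positivity))
  · intro hu hxy
    have hnoise : 0 < ‖u‖ ^ 2 := pow_pos (norm_pos_iff.2 hu) 2
    exact mul_lt_of_lt_one_left (coherence_pos hxy)
      ((div_lt_one (add_pos_of_nonneg_of_pos (by positivity) hnoise)).2
        (lt_add_of_pos_right _ hnoise))

/-- single-frequency core of the paper's Lemma 2: passing from
`y` to `z = w • y + u`, where `u` is orthogonal to both `x` and `y`, cannot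
increase the coherence with `x`; the inequality is strict if `u ≠ 0` and
`⟪x, y⟫ ≠ 0`. -/
theorem coherence_le_of_gain_plus_orthogonal_noise
    {H : Type*} [NormedAddCommGroup H] [InnerProductSpace ℂ H]
    (x y : H) (hx : x ≠ 0) (hy : y ≠ 0)
    (w : ℂ) (u : H) (hxu : ⟪x, u⟫_ℂ = 0) (hyu : ⟪y, u⟫_ℂ = 0)
    (z : H) (hz : z = w • y + u) (hz0 : z ≠ 0) :
    coherence x z ≤ coherence x y ∧
    (u ≠ 0 → ⟪x, y⟫_ℂ ≠ 0 → coherence x z < coherence x y) :=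
  coherence_le_of_gain_plus_orthogonal_noise_general x y w u hxu hyu z hz
end

section
/- In the frequency-domain model of an LCMT, let i and j be nodes and let a be their nearest common ancestor, i.e., a node with par^[p] i = a and par^[q] j = a for some p, q ≥ 0 such that the two ancestor chains i, par i, …, par^[p] i and j, par j, …, par^[q] j meet only at a. Then for every ω ∈ ℝ: ⟨X i ω, X j ω⟩ = conj( Π_{t = 0}^{p − 1} h (par^[t] i) ω ) · ( Π_{t = 0}^{q − 1} h (par^[t] j) ω ) · ‖X a ω‖² (inner product conjugate-linear in the first argument, empty products equal to 1). In particular, if h m ω ≠ 0 for every node m ≠ r, then ⟨X i ω, X j ω⟩ ≠ 0. -/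
open scoped InnerProductSpace

/-- in the frequency-domain model of an LCMT, the cross-spectral
density of two nodes `i`, `j` factors through their nearest common ancestor
`a`: with `par^[p] i = a`, `par^[q] j = a` and the two ancestor chains meeting
only at `a`,
`⟪X i ω, X j ω⟫ = conj(Π_{t<p} h (par^[t] i) ω) · (Π_{t<q} h (par^[t] j) ω) · ‖X a ω‖²`;
in particular, if no transfer function vanishes, `⟪X i ω, X j ω⟫ ≠ 0`. -/
theorem lcmt_cross_spectrum_through_common_ancestor
    {H : Type*} [NormedAddCommGroup H] [InnerProductSpace ℂ H]
    {V : Type*} [Fintype V]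
    (r : V) (par : V → V)
    (hroot : par r = r)
    (hpar : ∀ j, j ≠ r → par j ≠ j)
    (hreach : ∀ j, ∃ n, par^[n] j = r)
    (h : V → ℝ → ℂ) (ρ : V → ℝ → H)
    (horth : ∀ (ω : ℝ) (a b : V), a ≠ b → ⟪ρ a ω, ρ b ω⟫_ℂ = 0)
    (hwp : ∀ (j : V) (ω : ℝ), ρ j ω ≠ 0)
    (X : V → ℝ → H)
    (hXr : ∀ ω, X r ω = ρ r ω)
    (hX : ∀ j, j ≠ r → ∀ ω, X j ω = h j ω • X (par j) ω + ρ j ω)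
    (i j a : V) (p q : ℕ)
    (hpa : par^[p] i = a) (hqa : par^[q] j = a)
    (hmeet : ∀ s ≤ p, ∀ t ≤ q, par^[s] i = par^[t] j → s = p ∧ t = q) :
    ∀ ω : ℝ,
      ⟪X i ω, X j ω⟫_ℂ =
        (starRingEnd ℂ) (∏ t ∈ Finset.range p, h (par^[t] i) ω) *
          (∏ t ∈ Finset.range q, h (par^[t] j) ω) *
          ((‖X a ω‖ ^ 2 : ℝ) : ℂ) ∧
      ((∀ m : V, m ≠ r → h m ω ≠ 0) → ⟪X i ω, X j ω⟫_ℂ ≠ 0) := by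
  intro ω
  have hfix : ∀ m, par^[m] r = r := fun m => Function.iterate_fixed hroot m
  -- no nontrivial cycles except at the root
  have cyc : ∀ (b : V) (k : ℕ), 1 ≤ k → par^[k] b = b → b = r := by
    intro b k hk hbk
    obtain ⟨n, hn⟩ := hreach b
    have hmk : ∀ m, par^[m * k] b = b := by
      intro m
      induction m with
      | zero => simp
      | succ m ih =>
        have : (m + 1) * k = m * k + k := by ring
        rw [this, Function.iterate_add_apply, hbk, ih]
    have h1 : par^[n * k] b = r := by
      have : n * k = (n * k - n) + n := by
        have : n ≤ n * k := Nat.le_mul_of_pos_right n (by omega)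
        omega
      rw [this, Function.iterate_add_apply, hn, hfix]
    rw [hmk n] at h1; exact h1
  -- the strict chain from i never meets the chain from j
  have chainA : ∀ n, n < p → ∀ t, par^[n] i ≠ par^[t] j := by
    intro n hn t heq
    by_cases ht : t ≤ q
    · exact absurd (hmeet n hn.le t ht heq).1 hn.ne
    · push_neg at ht
      have h1 : par^[t] j = par^[t - q] a := by
        rw [← hqa, ← Function.iterate_add_apply]; congr 1; omega
      have h2 : par^[(p - n) + (t - q)] a = a := by
        calc par^[(p - n) + (t - q)] a = par^[p - n] (par^[t - q] a) :=
              Function.iterate_add_apply par _ _ a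
          _ = par^[p - n] (par^[n] i) := by rw [← h1, ← heq]
          _ = par^[p] i := by rw [← Function.iterate_add_apply]; congr 1; omega
          _ = a := hpa
      have har : a = r := cyc a _ (by omega) h2
      have : par^[n] i = par^[q] j := by
        rw [heq, h1, har, hfix, hqa, har]
      exact absurd (hmeet n hn.le q le_rfl this).1 hn.ne
  have chainB : ∀ m, m < q → ∀ s, par^[m] j ≠ par^[s] i := by
    intro m hm s heq
    by_cases hs : s ≤ p
    · exact absurd (hmeet s hs m hm.le heq.symm).2 hm.ne
    · push_neg at hs
      have h1 : par^[s] i = par^[s - p] a := by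
        rw [← hpa, ← Function.iterate_add_apply]; congr 1; omega
      have h2 : par^[(q - m) + (s - p)] a = a := by
        calc par^[(q - m) + (s - p)] a = par^[q - m] (par^[s - p] a) :=
              Function.iterate_add_apply par _ _ a
          _ = par^[q - m] (par^[m] j) := by rw [← h1, ← heq]
          _ = par^[q] j := by rw [← Function.iterate_add_apply]; congr 1; omega
          _ = a := hqa
      have har : a = r := cyc a _ (by omega) h2
      have : par^[p] i = par^[m] j := by
        rw [heq, h1, har, hfix, hpa, har]
      exact absurd (hmeet p le_rfl m hm.le this).2 hm.ne
  -- strict-chain nodes are not the root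
  have irch : ∀ n, n < p → par^[n] i ≠ r := by
    intro n hn hr
    obtain ⟨N, hN⟩ := hreach j
    exact chainA n hn N (hr.trans hN.symm)
  have jrch : ∀ m, m < q → par^[m] j ≠ r := by
    intro m hm hr
    obtain ⟨N, hN⟩ := hreach i
    exact chainB m hm N (hr.trans hN.symm)
  -- orthogonality of a noise to signals not descending through it
  have orth : ∀ (n : ℕ) (u m : V), par^[n] u = r → (∀ t, par^[t] u ≠ m) →
      ⟪ρ m ω, X u ω⟫_ℂ = 0 := by
    intro n
    induction n with
    | zero =>
      intro u m hu hm
      simp only [Function.iterate_zero_apply] at hu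
      subst hu
      rw [hXr]
      exact horth ω m u (Ne.symm (by simpa using hm 0))
    | succ n ih =>
      intro u m hu hm
      by_cases hur : u = r
      · rw [hur, hXr]
        exact horth ω m r (fun e => hm 0 (by simpa [hur] using e.symm))
      · have h1 : ⟪ρ m ω, X (par u) ω⟫_ℂ = 0 := by
          refine ih (par u) m ?_ ?_
          · rw [← Function.iterate_succ_apply]; exact hu
          · intro t
            rw [← Function.iterate_succ_apply]
            exact hm (t + 1)
        have h2 : ⟪ρ m ω, ρ u ω⟫_ℂ = 0 :=
          horth ω m u (Ne.symm (by simpa using hm 0))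
        rw [hX u hur ω, inner_add_right, inner_smul_right, h1, h2]
        ring
  -- expansion of a signal along its ancestor chain
  have expand : ∀ (k : ℕ) (u : V), (∀ n, n < k → par^[n] u ≠ r) →
      X u ω = (∏ t ∈ Finset.range k, h (par^[t] u) ω) • X (par^[k] u) ω
        + ∑ n ∈ Finset.range k,
            (∏ t ∈ Finset.range n, h (par^[t] u) ω) • ρ (par^[n] u) ω := by
    intro k
    induction k with
    | zero => intro u _; simp
    | succ k ih =>
      intro u hu
      have hk : par^[k] u ≠ r := hu k (Nat.lt_succ_self k)
      rw [ih u (fun n hn => hu n (hn.trans (Nat.lt_succ_self k))),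
        hX (par^[k] u) hk ω, Finset.prod_range_succ, Finset.sum_range_succ,
        Function.iterate_succ_apply', smul_add, smul_smul]
      abel
  set Pi : ℂ := ∏ t ∈ Finset.range p, h (par^[t] i) ω with hPidef
  set Pj : ℂ := ∏ t ∈ Finset.range q, h (par^[t] j) ω with hPjdef
  set Si : H := ∑ n ∈ Finset.range p,
      (∏ t ∈ Finset.range n, h (par^[t] i) ω) • ρ (par^[n] i) ω with hSidef
  set Sj : H := ∑ n ∈ Finset.range q,
      (∏ t ∈ Finset.range n, h (par^[t] j) ω) • ρ (par^[n] j) ω with hSjdef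
  have ei : X i ω = Pi • X a ω + Si := by
    have := expand p i irch
    rwa [hpa] at this
  have ej : X j ω = Pj • X a ω + Sj := by
    have := expand q j jrch
    rwa [hqa] at this
  obtain ⟨Na, hNa⟩ := hreach a
  -- noise on j's strict chain is orthogonal to X a
  have orthja : ∀ m, m < q → ⟪ρ (par^[m] j) ω, X a ω⟫_ℂ = 0 := by
    intro m hm
    refine orth Na a (par^[m] j) hNa ?_
    intro t heq
    have : par^[t + p] i = par^[t] a := by
      rw [Function.iterate_add_apply, hpa]
    exact chainB m hm (t + p) (heq.symm.trans this.symm)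
  have orthia : ∀ n, n < p → ⟪ρ (par^[n] i) ω, X a ω⟫_ℂ = 0 := by
    intro n hn
    refine orth Na a (par^[n] i) hNa ?_
    intro t heq
    have : par^[t + q] j = par^[t] a := by
      rw [Function.iterate_add_apply, hqa]
    exact chainA n hn (t + q) (heq.symm.trans this.symm)
  have t2 : ⟪X a ω, Sj⟫_ℂ = 0 := by
    rw [hSjdef, inner_sum]
    refine Finset.sum_eq_zero fun m hm => ?_
    rw [inner_smul_right, ← inner_conj_symm, orthja m (Finset.mem_range.mp hm)]
    simp
  have t3 : ⟪Si, X a ω⟫_ℂ = 0 := by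
    rw [hSidef, sum_inner]
    refine Finset.sum_eq_zero fun n hn => ?_
    rw [inner_smul_left, orthia n (Finset.mem_range.mp hn)]
    simp
  have t4 : ⟪Si, Sj⟫_ℂ = 0 := by
    rw [hSidef, hSjdef, sum_inner]
    refine Finset.sum_eq_zero fun n hn => ?_
    rw [inner_smul_left, inner_sum]
    have : ∀ m ∈ Finset.range q,
        ⟪ρ (par^[n] i) ω, (∏ t ∈ Finset.range m, h (par^[t] j) ω) • ρ (par^[m] j) ω⟫_ℂ = 0 := by
      intro m _
      rw [inner_smul_right, horth ω _ _ (chainA n (Finset.mem_range.mp hn) m)]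
      ring
    rw [Finset.sum_eq_zero this]
    ring
  have key : ⟪X i ω, X j ω⟫_ℂ =
      (starRingEnd ℂ) Pi * Pj * ((‖X a ω‖ ^ 2 : ℝ) : ℂ) := by
    simp only [ei, ej, inner_add_left, inner_add_right, inner_smul_left,
      inner_smul_right, t2, t3, t4, mul_zero, add_zero, zero_add]
    rw [inner_self_eq_norm_sq_to_K]
    push_cast
    norm_cast
    ring_nf
    norm_cast
  refine ⟨key, ?_⟩
  intro hnz
  have hPi : Pi ≠ 0 := by
    rw [hPidef]
    exact Finset.prod_ne_zero_iff.mpr fun t ht =>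
      hnz _ (irch t (Finset.mem_range.mp ht))
  have hPj : Pj ≠ 0 := by
    rw [hPjdef]
    exact Finset.prod_ne_zero_iff.mpr fun t ht =>
      hnz _ (jrch t (Finset.mem_range.mp ht))
  have hXa : X a ω ≠ 0 := by
    by_cases har : a = r
    · rw [har, hXr]; exact hwp r ω
    · have h0 : ⟪ρ a ω, X (par a) ω⟫_ℂ = 0 := by
        obtain ⟨N, hN⟩ := hreach (par a)
        refine orth N (par a) a hN ?_
        intro t heq
        have : par^[t + 1] a = a := by
          rw [Function.iterate_succ_apply]; exact heq
        exact har (cyc a (t + 1) (by omega) this)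
      have h1 : ⟪ρ a ω, X a ω⟫_ℂ ≠ 0 := by
        rw [hX a har ω, inner_add_right, inner_smul_right, h0, mul_zero, zero_add]
        exact inner_self_ne_zero.mpr (hwp a ω)
      intro h2
      rw [h2, inner_zero_right] at h1
      exact h1 rfl
  rw [key]
  refine mul_ne_zero (mul_ne_zero ?_ hPj) ?_
  · simpa using hPi
  · exact_mod_cast pow_ne_zero 2 (norm_ne_zero_iff.mpr hXa)
end

section
/- Let V be a finite type with at least two elements, let T be a tree on V (a connected acyclic simple graph), and let w : V → V → ℝ be a symmetric weight function. Assume the following path-monotonicity property: for all vertices i, u, v, if u lies strictly between i and v on the unique T-path from i to v (i.e., u is an interior vertex of that path, u ≠ i and u ≠ v), then w i u < w i v. Then T is the unique minimum spanning tree for w: for every tree T' on V (connected acyclic simple graph on the same vertex set) with T' ≠ T, the sum of w over the edges of T' is strictly greater than the sum of w over the edges of T. -/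
/-!
If `T' ≠ T` is another tree, pick an edge `ab` of `T'` outside `T`. Deleting it splits `T'` into
two components, and the `T`-path from `a` to `b` crosses between them along some edge `xy`. Path
monotonicity makes every edge of that path strictly lighter than `w a b`, so exchanging `ab` for
`xy` gives a strictly lighter tree with one edge fewer outside `T`; induct on that number.
-/

/-- The total weight of (the edges of) a simple graph on a finite vertex type,
with respect to a symmetric weight function `w`. -/
noncomputable def graphWeight {V : Type*} [Fintype V]
    (w : V → V → ℝ) (hw : ∀ a b, w a b = w b a) (G : SimpleGraph V) : ℝ :=
  ∑ e ∈ (Set.toFinite G.edgeSet).toFinset, Sym2.lift ⟨w, hw⟩ e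

namespace SimpleGraph

variable {V : Type*} {G H : SimpleGraph V}

lemma IsTree.eq_of_le (hG : G.IsTree) (hH : H.IsAcyclic) (hle : G ≤ H) : G = H :=
  (isTree_iff_maximal_isAcyclic.mp hG).2.eq_of_le hH hle

lemma IsTree.exists_mem_edgeSet_notMem (hG : G.IsTree) (hH : H.IsAcyclic) (hne : G ≠ H) :
    ∃ e ∈ G.edgeSet, e ∉ H.edgeSet := by
  by_contra! h
  exact hne (hG.eq_of_le hH (edgeSet_subset_edgeSet.mp h))

lemma reachable_deleteEdges_or_of_reachable {a b v : V} (h : G.Reachable v a) :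
    (G.deleteEdges {s(a, b)}).Reachable a v ∨ (G.deleteEdges {s(a, b)}).Reachable b v := by
  obtain ⟨p⟩ := h
  induction p with
  | nil => exact Or.inl .rfl
  | @cons u c a hadj q ih =>
    by_cases he : s(u, c) = s(a, b)
    · rcases Sym2.eq_iff.mp he with ⟨rfl, rfl⟩ | ⟨rfl, rfl⟩
      · exact Or.inl .rfl
      · exact Or.inr .rfl
    · have hadj' : (G.deleteEdges {s(a, b)}).Adj c u := by
        rw [deleteEdges_adj, Set.mem_singleton_iff, Sym2.eq_swap]
        exact ⟨hadj.symm, he⟩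
      exact ih.imp (·.trans hadj'.reachable) (·.trans hadj'.reachable)

lemma IsTree.deleteEdges_sup_edge {a b x y : V} (hG : G.IsTree)
    (hx : (G.deleteEdges {s(a, b)}).Reachable a x)
    (hy : ¬ (G.deleteEdges {s(a, b)}).Reachable a y) :
    (G.deleteEdges {s(a, b)} ⊔ edge x y).IsTree := by
  set G₀ := G.deleteEdges {s(a, b)}
  have hxy : ¬ G₀.Reachable x y := fun h ↦ hy (hx.trans h)
  have hby : G₀.Reachable b y :=
    (reachable_deleteEdges_or_of_reachable (hG.connected y a)).resolve_left hy
  have hG₀ : G₀ ≤ G₀ ⊔ edge x y := le_sup_left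
  have hay : (G₀ ⊔ edge x y).Reachable a y := by
    have hne : x ≠ y := by rintro rfl; exact hxy .rfl
    exact (hx.mono hG₀).trans (Adj.reachable (by simp [edge_adj, hne]))
  refine ⟨(connected_iff_exists_forall_reachable _).mpr ⟨a, fun v ↦ ?_⟩,
    (hG.isAcyclic.anti (deleteEdges_le _)).sup_edge_of_not_reachable hxy⟩
  rcases reachable_deleteEdges_or_of_reachable (hG.connected v a) with hv | hv
  · exact hv.mono hG₀
  · exact hay.trans ((hby.symm.trans hv).mono hG₀)

def IsPathMonotone (T : SimpleGraph V) (w : V → V → ℝ) : Prop :=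
  ∀ (i u v : V) (p : T.Path i v), u ∈ p.val.support → u ≠ i → u ≠ v → w i u < w i v

lemma IsPathMonotone.lift_lt_of_mem_edges {T : SimpleGraph V} {w : V → V → ℝ}
    (hmono : T.IsPathMonotone w) (hw : ∀ a b, w a b = w b a) {a b : V} {p : T.Walk a b}
    (hp : p.IsPath) {f : Sym2 V} (hf : f ∈ p.edges) (hfab : f ≠ s(a, b)) :
    Sym2.lift ⟨w, hw⟩ f < w a b := by
  induction p with
  | nil => simp at hf
  | @cons a c b hac q ih =>
    have hca : c ≠ a := hac.ne'
    obtain rfl | hcb := eq_or_ne c b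
    · rw [Walk.edges_cons, Walk.edges_eq_nil.mpr (Walk.isPath_iff_nil.mp hp.of_cons)] at hf
      exact absurd (List.mem_singleton.mp hf) hfab
    have hac_lt : w a c < w a b := hmono a c b ⟨_, hp⟩ (by simp) hca hcb
    have hcb_lt : w c b < w a b := by
      rw [hw a b, hw c b]
      exact hmono b c a ⟨_, hp.reverse⟩ (by simp) hcb hca
    rcases List.mem_cons.mp hf with rfl | hf
    · simpa using hac_lt
    by_cases hfcb : f = s(c, b)
    · subst hfcb; simpa using hcb_lt
    · exact (ih hp.of_cons hf hfcb).trans hcb_lt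

end SimpleGraph

section graphWeight

open SimpleGraph

variable {V : Type*} [Fintype V] (w : V → V → ℝ) (hw : ∀ a b, w a b = w b a) {G : SimpleGraph V}

lemma graphWeight_eq_sum_edgeFinset [Fintype G.edgeSet] :
    graphWeight w hw G = ∑ e ∈ G.edgeFinset, Sym2.lift ⟨w, hw⟩ e := by
  unfold graphWeight
  congr 1
  ext e
  simp

lemma graphWeight_deleteEdges_singleton {e : Sym2 V} (he : e ∈ G.edgeSet) :
    graphWeight w hw (G.deleteEdges {e}) = graphWeight w hw G - Sym2.lift ⟨w, hw⟩ e := by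
  classical
  rw [graphWeight_eq_sum_edgeFinset, graphWeight_eq_sum_edgeFinset,
    ← Finset.sum_erase_eq_sub (mem_edgeFinset.mpr he)]
  congr 1
  ext f
  simp [and_comm]

lemma graphWeight_sup_edge {x y : V} (hadj : ¬ G.Adj x y) (hxy : x ≠ y) :
    graphWeight w hw (G ⊔ edge x y) = graphWeight w hw G + w x y := by
  classical
  rw [graphWeight_eq_sum_edgeFinset, graphWeight_eq_sum_edgeFinset, G.edgeFinset_sup_edge hadj hxy,
    Finset.sum_cons, Sym2.lift_mk, add_comm]

end graphWeight

namespace SimpleGraph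

variable {V : Type*} [Fintype V] {T T' : SimpleGraph V} {w : V → V → ℝ}

lemma IsPathMonotone.exists_isTree_graphWeight_lt (hw : ∀ a b, w a b = w b a)
    (hmono : T.IsPathMonotone w) (hT : T.IsTree) (hT' : T'.IsTree) (hne : T' ≠ T) :
    ∃ T'' : SimpleGraph V, T''.IsTree ∧ graphWeight w hw T'' < graphWeight w hw T' ∧
      (T''.edgeSet \ T.edgeSet).ncard < (T'.edgeSet \ T.edgeSet).ncard := by
  obtain ⟨⟨a, b⟩, heT', heT⟩ := hT'.exists_mem_edgeSet_notMem hT.isAcyclic hne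
  set G₀ := T'.deleteEdges {s(a, b)}
  have hab : ¬ G₀.Reachable a b :=
    isBridge_iff.mp (isAcyclic_iff_forall_isBridge.mp hT'.isAcyclic heT')
  obtain ⟨p, hp⟩ := hT.connected.exists_isPath a b
  obtain ⟨⟨⟨x, y⟩, hxy⟩, hd, hx, hy⟩ := p.exists_boundary_dart {v | G₀.Reachable a v} .rfl hab
  have hxyp : s(x, y) ∈ p.edges := List.mem_map_of_mem hd
  have hG₀ : ¬ G₀.Adj x y := fun h ↦ hy (hx.trans h.reachable)
  refine ⟨G₀ ⊔ edge x y, hT'.deleteEdges_sup_edge hx hy, ?_, Set.ncard_lt_ncard ?_⟩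
  · have hlt := hmono.lift_lt_of_mem_edges hw hp hxyp (ne_of_mem_of_not_mem hxy heT)
    rw [graphWeight_sup_edge _ _ hG₀ hxy.ne, graphWeight_deleteEdges_singleton _ _ heT']
    simp only [Sym2.lift_mk] at hlt ⊢
    linarith
  · have hedges : (G₀ ⊔ edge x y).edgeSet = insert s(x, y) (T'.edgeSet \ {s(a, b)}) := by
      rw [edgeSet_sup, edgeSet_deleteEdges, edgeSet_edge_of_ne hxy.ne, Set.union_singleton]
    rw [hedges]
    refine LE.le.ssubset_of_mem_notMem ?_ ⟨heT', heT⟩ ?_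
    · rintro f ⟨rfl | ⟨hf, -⟩, hfT⟩
      · exact absurd hxy hfT
      · exact ⟨hf, hfT⟩
    · rintro ⟨h | ⟨-, h⟩, -⟩
      · exact heT (h ▸ hxy)
      · exact h rfl

end SimpleGraph

theorem unique_mst_of_path_monotone_general
    {V : Type*} [Fintype V]
    (T : SimpleGraph V) (hT : T.IsTree)
    (w : V → V → ℝ) (hw : ∀ a b, w a b = w b a)
    (hmono : ∀ (i u v : V) (p : T.Path i v),
      u ∈ p.val.support → u ≠ i → u ≠ v → w i u < w i v) :
    ∀ T' : SimpleGraph V, T'.IsTree → T' ≠ T →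
      graphWeight w hw T < graphWeight w hw T' := by
  intro T' hT' hne
  induction hn : (T'.edgeSet \ T.edgeSet).ncard using Nat.strong_induction_on
    generalizing T' with
  | _ n ih =>
  obtain ⟨T'', hT'', hlt, hcard⟩ :=
    SimpleGraph.IsPathMonotone.exists_isTree_graphWeight_lt hw hmono hT hT' hne
  obtain rfl | hne'' := eq_or_ne T'' T
  · exact hlt
  · exact (ih _ (hn ▸ hcard) T'' hT'' hne'' rfl).trans hlt

/-- combinatorial core of the paper's main theorem: if a
symmetric weight function `w` on the vertices of a tree `T` is strictly
increasing along tree paths away from any fixed vertex (every interior vertex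
`u` of the unique path from `i` to `v` satisfies `w i u < w i v`), then `T` is
the unique minimum spanning tree for `w`: any other tree on the same vertex set
has strictly larger total weight. -/
theorem unique_mst_of_path_monotone
    {V : Type*} [Fintype V] [Nontrivial V]
    (T : SimpleGraph V) (hT : T.IsTree)
    (w : V → V → ℝ) (hw : ∀ a b, w a b = w b a)
    (hmono : ∀ (i u v : V) (p : T.Path i v),
      u ∈ p.val.support → u ≠ i → u ≠ v → w i u < w i v) :
    ∀ T' : SimpleGraph V, T'.IsTree → T' ≠ T →
      graphWeight w hw T < graphWeight w hw T' :=
  unique_mst_of_path_monotone_general T hT w hw hmono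
end

section
/- In the frequency-domain model of an LCMT, let i be a child of the root, i.e., i ≠ r and par i = r. Define: par* : V → V by par* i = i, par* r = i, and par* k = par k for k ≠ i, r; transfer functions h* by h* r ω = ⟨X i ω, X r ω⟩ / ‖X i ω‖², h* i ω = 0, and h* k = h k for k ≠ i, r; noises ρ* by ρ* i ω = X i ω, ρ* r ω = X r ω − (h* r ω) • X i ω, and ρ* k = ρ k for k ≠ i, r. Then: (a) par* is a rooted-tree parent map with root i (par* i = i, par* k ≠ k for k ≠ i, and every node reaches i by iterating par*), and its undirected edge set { {k, par* k} : k ≠ i } equals the original edge set { {k, par k} : k ≠ r }; (b) for every ω and all a ≠ b, ⟨ρ* a ω, ρ* b ω⟩ = 0; (c) for every node k and every ω, ρ* k ω ≠ 0; (d) the original signals satisfy the new recursion: X i ω = ρ* i ω and X k ω = h* k ω • X (par* k) ω + ρ* k ω for every k ≠ i. Hence (V, par*, h*, ρ*) is a well-posed LCMT with root i whose signals coincide with those of the original LCMT. -/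
open scoped InnerProductSpace

/-!
A signal `X j` is a combination of the noises on the path from `j` to the root, hence orthogonal to
every other noise; acyclicity then gives `⟪ρ j, X j⟫ = ‖ρ j‖² ≠ 0`, so all signals are nonzero.
Re-rooting at the child `i` keeps every noise except those of `i` and `r`: `X i` becomes the new
root noise, and the new noise of `r` is the residual of `X r = ρ r` after projecting onto `X i`.
Both are built from `ρ i` and `ρ r` only, hence orthogonal to all other noises, and they are
orthogonal to each other by the projection property. The residual is nonzero because `ρ i` is
orthogonal to `X r` but not to `X i`.
-/

section RootedParentMap

variable {V : Type*}

structure IsRootedParentMap (par : V → V) (r : V) : Prop where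
  map_root : par r = r
  exists_iterate_eq_root : ∀ j, ∃ n, par^[n] j = r

def parentEdges (par : V → V) (r : V) : Set (Sym2 V) :=
  {e | ∃ k, k ≠ r ∧ e = s(k, par k)}

namespace IsRootedParentMap

variable {par : V → V} {r : V}

theorem iterate_root (hP : IsRootedParentMap par r) (n : ℕ) : par^[n] r = r :=
  Function.iterate_fixed hP.map_root n

theorem induction (hP : IsRootedParentMap par r) {motive : V → Prop} (root : motive r)
    (step : ∀ j, j ≠ r → motive (par j) → motive j) (j : V) : motive j := by
  obtain ⟨n, hn⟩ := hP.exists_iterate_eq_root j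
  induction n generalizing j with
  | zero => obtain rfl : j = r := hn; exact root
  | succ n ih =>
    by_cases hj : j = r
    · rwa [hj]
    · exact step j hj (ih _ hn)

theorem iterate_succ_ne_self (hP : IsRootedParentMap par r) {j : V} (hj : j ≠ r) (m : ℕ) :
    par^[m + 1] j ≠ j := by
  intro hcyc
  obtain ⟨n, hn⟩ := hP.exists_iterate_eq_root j
  have hperiodic : par^[n * (m + 1)] j = j := Function.IsPeriodicPt.const_mul hcyc n
  rw [mul_add_one, Function.iterate_add_apply, hn, hP.iterate_root] at hperiodic
  exact hj hperiodic.symm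

theorem map_ne_self (hP : IsRootedParentMap par r) {j : V} (hj : j ≠ r) : par j ≠ j :=
  hP.iterate_succ_ne_self hj 0

section Reroot

variable {i : V} {pars : V → V}

theorem reroot (hP : IsRootedParentMap par r) (hparsi : pars i = i)
    (hparsr : pars r = i) (hparso : ∀ k, k ≠ i → k ≠ r → pars k = par k) :
    IsRootedParentMap pars i where
  map_root := hparsi
  exists_iterate_eq_root := hP.induction ⟨1, hparsr⟩ fun j hjr ⟨n, hn⟩ => by
    by_cases hji : j = i
    · exact ⟨0, hji⟩
    · exact ⟨n + 1, by rw [Function.iterate_succ_apply, hparso j hji hjr, hn]⟩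

end Reroot

end IsRootedParentMap

theorem parentEdges_reroot {par pars : V → V} {r i : V} (hir : i ≠ r) (hpari : par i = r)
    (hparsr : pars r = i) (hparso : ∀ k, k ≠ i → k ≠ r → pars k = par k) :
    parentEdges pars i = parentEdges par r := by
  have hedge : s(r, pars r) = s(i, par i) := by rw [hparsr, hpari, Sym2.eq_swap]
  ext e
  constructor
  · rintro ⟨k, hki, rfl⟩
    by_cases hkr : k = r
    · exact ⟨i, hir, by rw [hkr, hedge]⟩
    · exact ⟨k, hkr, by rw [hparso k hki hkr]⟩
  · rintro ⟨k, hkr, rfl⟩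
    by_cases hki : k = i
    · exact ⟨r, hir.symm, by rw [hki, hedge]⟩
    · exact ⟨k, hki, by rw [hparso k hki hkr]⟩

end RootedParentMap

section LCMT

variable {𝕜 H V : Type*} [RCLike 𝕜] [NormedAddCommGroup H] [InnerProductSpace 𝕜 H]

/-- A well-posed LCMT at a single frequency. -/
structure IsLCMT (par : V → V) (r : V) (h : V → 𝕜) (ρ X : V → H) : Prop
    extends IsRootedParentMap par r where
  inner_noise_eq_zero : ∀ a b, a ≠ b → ⟪ρ a, ρ b⟫_𝕜 = 0
  noise_ne_zero : ∀ j, ρ j ≠ 0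
  signal_root : X r = ρ r
  signal_of_ne_root : ∀ j, j ≠ r → X j = h j • X (par j) + ρ j

namespace IsLCMT

variable {par : V → V} {r : V} {h : V → 𝕜} {ρ X : V → H}

theorem inner_noise_signal_eq_zero (hT : IsLCMT par r h ρ X) {a j : V}
    (ha : ∀ m, par^[m] j ≠ a) : ⟪ρ a, X j⟫_𝕜 = 0 := by
  induction j using hT.induction with
  | root => rw [hT.signal_root]; exact hT.inner_noise_eq_zero a r (ha 0).symm
  | step j hjr ih =>
    rw [hT.signal_of_ne_root j hjr, inner_add_right, inner_smul_right,
      ih fun m => ha (m + 1), hT.inner_noise_eq_zero a j (ha 0).symm, mul_zero, add_zero]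

theorem inner_noise_signal_self (hT : IsLCMT par r h ρ X) (j : V) :
    ⟪ρ j, X j⟫_𝕜 = ⟪ρ j, ρ j⟫_𝕜 := by
  by_cases hjr : j = r
  · rw [hjr, hT.signal_root]
  · have hacyclic : ⟪ρ j, X (par j)⟫_𝕜 = 0 :=
      hT.inner_noise_signal_eq_zero fun m => hT.iterate_succ_ne_self hjr m
    rw [hT.signal_of_ne_root j hjr, inner_add_right, inner_smul_right, hacyclic, mul_zero,
      zero_add]

theorem inner_noise_signal_self_ne_zero (hT : IsLCMT par r h ρ X) (j : V) :
    ⟪ρ j, X j⟫_𝕜 ≠ 0 := by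
  rw [hT.inner_noise_signal_self, inner_self_ne_zero]
  exact hT.noise_ne_zero j

theorem signal_ne_zero (hT : IsLCMT par r h ρ X) (j : V) : X j ≠ 0 := fun hX =>
  hT.inner_noise_signal_self_ne_zero j (by rw [hX, inner_zero_right])

section Reroot

variable {i : V} {pars : V → V} {hs : V → 𝕜} {ρs : V → H}

theorem inner_noise_signal_child_eq_zero (hT : IsLCMT par r h ρ X) (hpari : par i = r) {a : V}
    (hai : a ≠ i) (har : a ≠ r) : ⟪ρ a, X i⟫_𝕜 = 0 := by
  refine hT.inner_noise_signal_eq_zero fun m => ?_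
  cases m with
  | zero => exact hai.symm
  | succ m => rw [Function.iterate_succ_apply, hpari, hT.iterate_root]; exact har.symm

theorem signal_root_sub_smul_ne_zero (hT : IsLCMT par r h ρ X) (hir : i ≠ r) (c : 𝕜) :
    X r - c • X i ≠ 0 := by
  intro hzero
  have hc : c * ⟪ρ i, X i⟫_𝕜 = 0 := by
    rw [← inner_smul_right, ← sub_eq_zero.mp hzero, hT.signal_root,
      hT.inner_noise_eq_zero i r hir]
  rw [(mul_eq_zero.mp hc).resolve_right (hT.inner_noise_signal_self_ne_zero i), zero_smul,
    sub_zero] at hzero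
  exact hT.signal_ne_zero r hzero

theorem inner_noise_reroot_eq_zero (hT : IsLCMT par r h ρ X) (hpari : par i = r)
    (hρsi : ρs i = X i) (hρsr : ρs r = X r - hs r • X i)
    (hρso : ∀ k, k ≠ i → k ≠ r → ρs k = ρ k) ⦃a b : V⦄ (hab : a ≠ b) (hbi : b ≠ i)
    (hbr : b ≠ r) : ⟪ρ b, ρs a⟫_𝕜 = 0 := by
  have hbXi := hT.inner_noise_signal_child_eq_zero hpari hbi hbr
  by_cases hai : a = i
  · rw [hai, hρsi, hbXi]
  by_cases har : a = r
  · rw [har, hρsr, inner_sub_right, inner_smul_right, hbXi, hT.signal_root,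
      hT.inner_noise_eq_zero b r hbr, mul_zero, sub_zero]
  · rw [hρso a hai har]
    exact hT.inner_noise_eq_zero b a hab.symm

theorem reroot (hT : IsLCMT par r h ρ X) (hir : i ≠ r) (hpari : par i = r)
    (hparsi : pars i = i) (hparsr : pars r = i) (hparso : ∀ k, k ≠ i → k ≠ r → pars k = par k)
    (hhsr : hs r = ⟪X i, X r⟫_𝕜 / ((‖X i‖ ^ 2 : ℝ) : 𝕜)) (hhso : ∀ k, k ≠ i → k ≠ r → hs k = h k)
    (hρsi : ρs i = X i) (hρsr : ρs r = X r - hs r • X i)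
    (hρso : ∀ k, k ≠ i → k ≠ r → ρs k = ρ k) :
    IsLCMT pars i hs ρs X where
  toIsRootedParentMap := hT.toIsRootedParentMap.reroot hparsi hparsr hparso
  inner_noise_eq_zero a b hab := by
    have hwiener : ⟪X i, ρs r⟫_𝕜 = 0 := by
      have hresidual := (𝕜 ∙ X i).sub_starProjection_mem_orthogonal (X r)
      rwa [Submodule.starProjection_singleton, ← hhsr, ← hρsr,
        Submodule.mem_orthogonal_singleton_iff_inner_right] at hresidual
    have hother := hT.inner_noise_reroot_eq_zero hpari hρsi hρsr hρso
    by_cases hb : b ≠ i ∧ b ≠ r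
    · rw [hρso b hb.1 hb.2]; exact inner_eq_zero_symm.mp (hother hab hb.1 hb.2)
    by_cases ha : a ≠ i ∧ a ≠ r
    · rw [hρso a ha.1 ha.2]; exact hother hab.symm ha.1 ha.2
    obtain ⟨rfl, rfl⟩ | ⟨rfl, rfl⟩ : a = i ∧ b = r ∨ a = r ∧ b = i := by grind
    · rwa [hρsi]
    · rw [hρsi]; exact inner_eq_zero_symm.mp hwiener
  noise_ne_zero k := by
    by_cases hki : k = i
    · rw [hki, hρsi]; exact hT.signal_ne_zero i
    by_cases hkr : k = r
    · rw [hkr, hρsr]; exact hT.signal_root_sub_smul_ne_zero hir (hs r)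
    · rw [hρso k hki hkr]; exact hT.noise_ne_zero k
  signal_root := hρsi.symm
  signal_of_ne_root k hki := by
    by_cases hkr : k = r
    · rw [hkr, hparsr, hρsr, add_sub_cancel]
    · rw [hparso k hki hkr, hhso k hki hkr, hρso k hki hkr]
      exact hT.signal_of_ne_root k hkr

end Reroot

end IsLCMT

end LCMT

theorem lcmt_rerooting_general
    {H : Type*} [NormedAddCommGroup H] [InnerProductSpace ℂ H]
    {V : Type*}
    (r : V) (par : V → V)
    (hroot : par r = r)
    (hreach : ∀ j, ∃ n, par^[n] j = r)
    (h : V → ℝ → ℂ) (ρ : V → ℝ → H)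
    (horth : ∀ (ω : ℝ) (a b : V), a ≠ b → ⟪ρ a ω, ρ b ω⟫_ℂ = 0)
    (hwp : ∀ (j : V) (ω : ℝ), ρ j ω ≠ 0)
    (X : V → ℝ → H)
    (hXr : ∀ ω, X r ω = ρ r ω)
    (hX : ∀ j, j ≠ r → ∀ ω, X j ω = h j ω • X (par j) ω + ρ j ω)
    -- `i` is a child of the root:
    (i : V) (hir : i ≠ r) (hpari : par i = r)
    -- the re-rooted parent map `par*`:
    (pars : V → V)
    (hparsi : pars i = i) (hparsr : pars r = i)
    (hparso : ∀ k, k ≠ i → k ≠ r → pars k = par k)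
    -- the new transfer functions `h*`:
    (hs : V → ℝ → ℂ)
    (hhsr : ∀ ω, hs r ω = ⟪X i ω, X r ω⟫_ℂ / ((‖X i ω‖ ^ 2 : ℝ) : ℂ))
    (hhso : ∀ k, k ≠ i → k ≠ r → hs k = h k)
    -- the new noises `ρ*`:
    (ρs : V → ℝ → H)
    (hρsi : ∀ ω, ρs i ω = X i ω)
    (hρsr : ∀ ω, ρs r ω = X r ω - hs r ω • X i ω)
    (hρso : ∀ k, k ≠ i → k ≠ r → ρs k = ρ k) :
    -- (a) `par*` is a rooted-tree parent map with root `i`,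
    --     with the same undirected edge set:
    (pars i = i ∧ (∀ k, k ≠ i → pars k ≠ k) ∧ (∀ k, ∃ n, pars^[n] k = i) ∧
      {e : Sym2 V | ∃ k, k ≠ i ∧ e = s(k, pars k)} =
        {e : Sym2 V | ∃ k, k ≠ r ∧ e = s(k, par k)}) ∧
    -- (b) the new noises are mutually orthogonal at every frequency:
    (∀ (ω : ℝ) (a b : V), a ≠ b → ⟪ρs a ω, ρs b ω⟫_ℂ = 0) ∧
    -- (c) well-posedness of the new noises:
    (∀ (k : V) (ω : ℝ), ρs k ω ≠ 0) ∧
    -- (d) the original signals satisfy the new recursion: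
    ((∀ ω : ℝ, X i ω = ρs i ω) ∧
      (∀ k, k ≠ i → ∀ ω : ℝ, X k ω = hs k ω • X (pars k) ω + ρs k ω)) := by
  have hP : IsRootedParentMap par r := ⟨hroot, hreach⟩
  have hP' : IsRootedParentMap pars i := hP.reroot hparsi hparsr hparso
  have hT : ∀ ω, IsLCMT par r (h · ω) (ρ · ω) (X · ω) := fun ω =>
    { hP with
      inner_noise_eq_zero := horth ω
      noise_ne_zero := (hwp · ω)
      signal_root := hXr ω
      signal_of_ne_root := fun j hj => hX j hj ω }
  have hT' : ∀ ω, IsLCMT pars i (hs · ω) (ρs · ω) (X · ω) := fun ω =>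
    (hT ω).reroot hir hpari hparsi hparsr hparso (hhsr ω)
      (fun k hki hkr => congrFun (hhso k hki hkr) ω) (hρsi ω) (hρsr ω)
      (fun k hki hkr => congrFun (hρso k hki hkr) ω)
  exact ⟨⟨hparsi, fun k => hP'.map_ne_self, hP'.exists_iterate_eq_root,
      parentEdges_reroot hir hpari hparsr hparso⟩,
    fun ω => (hT' ω).inner_noise_eq_zero, fun k ω => (hT' ω).noise_ne_zero k,
    fun ω => (hT' ω).signal_root, fun k hk ω => (hT' ω).signal_of_ne_root k hk⟩

/-- re-rooting theorem: in a well-posed frequency-domain LCMT,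
the root `r` can be moved to any of its children `i`. With the modified parent
map `par*`, transfer functions `h*` (where `h* r` is the Wiener filter of `X r`
given `X i`) and noises `ρ*`:
(a) `par*` is a rooted-tree parent map with root `i` and the same undirected
    edge set;
(b) the new noises are pairwise orthogonal at every frequency;
(c) the new noises are everywhere nonzero (well-posedness);
(d) the original signals satisfy the new recursion.
Hence `(V, par*, h*, ρ*)` is a well-posed LCMT with root `i` and the same
signals. -/
theorem lcmt_rerooting
    {H : Type*} [NormedAddCommGroup H] [InnerProductSpace ℂ H]
    {V : Type*} [Fintype V]
    (r : V) (par : V → V)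
    (hroot : par r = r)
    (hpar : ∀ j, j ≠ r → par j ≠ j)
    (hreach : ∀ j, ∃ n, par^[n] j = r)
    (h : V → ℝ → ℂ) (ρ : V → ℝ → H)
    (horth : ∀ (ω : ℝ) (a b : V), a ≠ b → ⟪ρ a ω, ρ b ω⟫_ℂ = 0)
    (hwp : ∀ (j : V) (ω : ℝ), ρ j ω ≠ 0)
    (X : V → ℝ → H)
    (hXr : ∀ ω, X r ω = ρ r ω)
    (hX : ∀ j, j ≠ r → ∀ ω, X j ω = h j ω • X (par j) ω + ρ j ω)
    -- `i` is a child of the root: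
    (i : V) (hir : i ≠ r) (hpari : par i = r)
    -- the re-rooted parent map `par*`:
    (pars : V → V)
    (hparsi : pars i = i) (hparsr : pars r = i)
    (hparso : ∀ k, k ≠ i → k ≠ r → pars k = par k)
    -- the new transfer functions `h*`:
    (hs : V → ℝ → ℂ)
    (hhsr : ∀ ω, hs r ω = ⟪X i ω, X r ω⟫_ℂ / ((‖X i ω‖ ^ 2 : ℝ) : ℂ))
    (hhsi : ∀ ω, hs i ω = 0)
    (hhso : ∀ k, k ≠ i → k ≠ r → hs k = h k)
    -- the new noises `ρ*`:
    (ρs : V → ℝ → H)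
    (hρsi : ∀ ω, ρs i ω = X i ω)
    (hρsr : ∀ ω, ρs r ω = X r ω - hs r ω • X i ω)
    (hρso : ∀ k, k ≠ i → k ≠ r → ρs k = ρ k) :
    -- (a) `par*` is a rooted-tree parent map with root `i`,
    --     with the same undirected edge set:
    (pars i = i ∧ (∀ k, k ≠ i → pars k ≠ k) ∧ (∀ k, ∃ n, pars^[n] k = i) ∧
      {e : Sym2 V | ∃ k, k ≠ i ∧ e = s(k, pars k)} =
        {e : Sym2 V | ∃ k, k ≠ r ∧ e = s(k, par k)}) ∧
    -- (b) the new noises are mutually orthogonal at every frequency: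
    (∀ (ω : ℝ) (a b : V), a ≠ b → ⟪ρs a ω, ρs b ω⟫_ℂ = 0) ∧
    -- (c) well-posedness of the new noises:
    (∀ (k : V) (ω : ℝ), ρs k ω ≠ 0) ∧
    -- (d) the original signals satisfy the new recursion:
    ((∀ ω : ℝ, X i ω = ρs i ω) ∧
      (∀ k, k ≠ i → ∀ ω : ℝ, X k ω = hs k ω • X (pars k) ω + ρs k ω)) :=
  lcmt_rerooting_general r par hroot hreach h ρ horth hwp X hXr hX i hir hpari pars hparsi hparsr
    hparso hs hhsr hhso ρs hρsi hρsr hρso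
end
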